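/- arXiv:2209.13976 — 2 statements merged into one kernel-verified Lean document; each statement's English description precedes it below -/
import Mathlib

section
/- Let c > 0, ξ₀ ∈ ℝ with sin(ξ₀/2) ≠ 0, and τ₀ ∈ ℝ with τ₀² = 4c·sin²(ξ₀/2). Define x_fd(t) = x₀ - (c·sin(ξ₀)/τ₀)·t. Then x_fd(t) = x₀ ± √c·cos(ξ₀/2)·sgn(sin(ξ₀/2))·t, so the speed of propagation is √c·|cos(ξ₀/2)|; in particular the speed vanishes if and only if ξ₀ = (2k+1)π for some integer k. -/
theorem semidiscrete_ray_speed (c : ℝ) (hc : 0 < c) (ξ₀ x₀ : ℝ)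
    (hξ : Real.sin (ξ₀ / 2) ≠ 0) (τ₀ : ℝ)
    (hτ : τ₀ ^ 2 = 4 * c * Real.sin (ξ₀ / 2) ^ 2)
    (xfd : ℝ → ℝ)
    (hx : ∀ t, xfd t = x₀ - (c * Real.sin ξ₀ / τ₀) * t) :
    ((∀ t, xfd t = x₀ + Real.sqrt c * Real.cos (ξ₀ / 2) * Real.sign (Real.sin (ξ₀ / 2)) * t) ∨
     (∀ t, xfd t = x₀ - Real.sqrt c * Real.cos (ξ₀ / 2) * Real.sign (Real.sin (ξ₀ / 2)) * t)) ∧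
    (∀ t, |deriv xfd t| = Real.sqrt c * |Real.cos (ξ₀ / 2)|) ∧
    (Real.sqrt c * |Real.cos (ξ₀ / 2)| = 0 ↔ ∃ k : ℤ, ξ₀ = (2 * k + 1) * Real.pi) := by
  set s := Real.sin (ξ₀ / 2) with hs
  have hsq : Real.sqrt c ^ 2 = c := Real.sq_sqrt hc.le
  have hsqpos : 0 < Real.sqrt c := Real.sqrt_pos.mpr hc
  have hτ0 : τ₀ ≠ 0 := by
    intro h
    rw [h] at hτ
    have : s ^ 2 = 0 := by nlinarith
    exact hξ (pow_eq_zero_iff (n := 2) (by norm_num) |>.mp this)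
  have hsin : Real.sin ξ₀ = 2 * s * Real.cos (ξ₀ / 2) := by
    have := Real.sin_two_mul (ξ₀ / 2)
    rw [show 2 * (ξ₀ / 2) = ξ₀ by ring] at this
    rw [this, hs]
  have hτcases : τ₀ = 2 * Real.sqrt c * |s| ∨ τ₀ = -(2 * Real.sqrt c * |s|) := by
    have h : τ₀ ^ 2 = (2 * Real.sqrt c * |s|) ^ 2 := by
      rw [hτ]; rw [mul_pow, mul_pow, sq_abs, hsq]; ring
    exact sq_eq_sq_iff_eq_or_eq_neg.mp h
  have hsgn : |s| * s.sign = s := by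
    rcases lt_or_gt_of_ne hξ with h | h
    · rw [Real.sign_of_neg h, abs_of_neg h]; ring
    · rw [Real.sign_of_pos h, abs_of_pos h]; ring
  have habs : |s| ≠ 0 := abs_ne_zero.mpr hξ
  have hslope : c * Real.sin ξ₀ / τ₀ = Real.sqrt c * Real.cos (ξ₀ / 2) * s.sign ∨
      c * Real.sin ξ₀ / τ₀ = -(Real.sqrt c * Real.cos (ξ₀ / 2) * s.sign) := by
    rcases hτcases with h | h
    · left
      rw [h, hsin, div_eq_iff (by positivity)]
      rw [show Real.sqrt c * Real.cos (ξ₀ / 2) * s.sign * (2 * Real.sqrt c * |s|)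
          = 2 * Real.sqrt c ^ 2 * Real.cos (ξ₀ / 2) * (|s| * s.sign) from by ring, hsq, hsgn]
      ring
    · right
      rw [h, hsin, div_eq_iff (by rw [h] at hτ0; exact hτ0)]
      rw [show -(Real.sqrt c * Real.cos (ξ₀ / 2) * s.sign) * -(2 * Real.sqrt c * |s|)
          = 2 * Real.sqrt c ^ 2 * Real.cos (ξ₀ / 2) * (|s| * s.sign) from by ring, hsq, hsgn]
      ring
  have habsslope : |c * Real.sin ξ₀ / τ₀| = Real.sqrt c * |Real.cos (ξ₀ / 2)| := by
    have hsgnabs : |s.sign| = 1 := by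
      rcases lt_or_gt_of_ne hξ with h | h
      · rw [Real.sign_of_neg h]; norm_num
      · rw [Real.sign_of_pos h]; norm_num
    rcases hslope with h | h <;> rw [h]
    · rw [abs_mul, abs_mul, hsgnabs, abs_of_pos hsqpos]; ring
    · rw [abs_neg, abs_mul, abs_mul, hsgnabs, abs_of_pos hsqpos]; ring
  refine ⟨?_, ?_, ?_⟩
  · rcases hslope with h | h
    · right; intro t; rw [hx t, h]
    · left; intro t; rw [hx t, h]; ring
  · intro t
    have hfun : xfd = fun t => x₀ - (c * Real.sin ξ₀ / τ₀) * t := funext hx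
    rw [hfun]
    have : deriv (fun t => x₀ - (c * Real.sin ξ₀ / τ₀) * t) t
        = -(c * Real.sin ξ₀ / τ₀) := by
      have h1 : HasDerivAt (fun t : ℝ => x₀ - (c * Real.sin ξ₀ / τ₀) * t)
          (0 - (c * Real.sin ξ₀ / τ₀) * 1) t :=
        (hasDerivAt_const t x₀).sub ((hasDerivAt_id t).const_mul _)
      simpa using h1.deriv
    rw [this, abs_neg, habsslope]
  · constructor
    · intro h
      have hcos : Real.cos (ξ₀ / 2) = 0 := by
        rcases mul_eq_zero.mp h with h | h
        · exact absurd h hsqpos.ne'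
        · exact abs_eq_zero.mp h
      rcases Real.cos_eq_zero_iff.mp hcos with ⟨k, hk⟩
      exact ⟨k, by linarith⟩
    · rintro ⟨k, hk⟩
      have hcos : Real.cos (ξ₀ / 2) = 0 := by
        apply Real.cos_eq_zero_iff.mpr
        exact ⟨k, by rw [hk]⟩
      rw [hcos, abs_zero, mul_zero]
end

section
/- Let c > 0, ξ₀ ∈ ℝ, and let x(t) = x₀ ± √c·(ξ₀/|ξ₀|)·t with ξ₀ ≠ 0, M₀ ∈ ℂ, φ(x,t) = ξ₀(x - x(t)) + (1/2)M₀(x - x(t))². Then the spatial derivative of the eikonal expression R(x,t) = c(∂_x φ)² - (∂_t φ)² also vanishes on the ray: ∂_x R(x(t), t) = 0 for all t. -/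
/-!
Along the ray the phase is a travelling wave `φ x t = f (x - x(t))` with profile
`f u = ξ₀ u + M₀ u² / 2` and speed `v = ± √c · sign ξ₀`. Hence `∂ₜφ = -v ∂ₓφ`, so
`c (∂ₓφ)² - (∂ₜφ)² = (c - v²) (∂ₓφ)²` vanishes identically in `x` since `v² = c`,
and so does its `x`-derivative.
-/

lemma sq_div_abs_self {a : ℝ} (ha : a ≠ 0) : (a / |a|) ^ 2 = 1 := by
  rw [div_pow, sq_abs, div_self (pow_ne_zero 2 ha)]

lemma sq_sign_mul_sqrt_mul_div_abs {c ε a : ℝ} (hc : 0 ≤ c) (hε : ε = 1 ∨ ε = -1)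
    (ha : a ≠ 0) : (ε * Real.sqrt c * (a / |a|)) ^ 2 = c := by
  have hε2 : ε ^ 2 = 1 := by rcases hε with rfl | rfl <;> norm_num
  rw [mul_pow, mul_pow, hε2, Real.sq_sqrt hc, sq_div_abs_self ha, one_mul, mul_one]

lemma hasDerivAt_linear_add_half_mul_sq (a b u : ℂ) :
    HasDerivAt (fun u : ℂ => a * u + b / 2 * u ^ 2) (a + b * u) u := by
  refine (((hasDerivAt_id u).const_mul a).add
    ((hasDerivAt_pow 2 u).const_mul (b / 2))).congr_deriv ?_
  simp only [mul_one, Nat.cast_ofNat]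
  ring

section TravellingWave

variable {f f' : ℂ → ℂ} (hf : ∀ u, HasDerivAt f (f' u) u)
include hf

lemma hasDerivAt_travellingWave_space (a : ℂ) (y : ℝ) :
    HasDerivAt (fun z : ℝ => f (z - a)) (f' (y - a)) y :=
  ((hf (y - a)).comp_sub_const (y : ℂ) a).comp_ofReal

lemma hasDerivAt_travellingWave_time {xr : ℝ → ℝ} {v t : ℝ} (hxr : HasDerivAt xr v t)
    (y : ℝ) : HasDerivAt (fun s : ℝ => f (y - xr s)) (-v * f' (y - xr t)) t := by
  have hshift : HasDerivAt (fun s : ℝ => (y : ℂ) - xr s) (-v) t := by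
    simpa using hxr.ofReal_comp.const_sub (y : ℂ)
  exact ((hf _).comp t hshift).congr_deriv (mul_comm _ _)

lemma eikonal_travellingWave {xr : ℝ → ℝ} {v t : ℝ} (hxr : HasDerivAt xr v t) (c y : ℝ) :
    (c : ℂ) * deriv (fun z : ℝ => f (z - xr t)) y ^ 2 -
        deriv (fun s : ℝ => f (y - xr s)) t ^ 2 =
      ((c : ℂ) - (v : ℂ) ^ 2) * f' (y - xr t) ^ 2 := by
  rw [(hasDerivAt_travellingWave_space hf _ y).deriv,
    (hasDerivAt_travellingWave_time hf hxr y).deriv]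
  ring

end TravellingWave

theorem eikonal_deriv_vanishes_on_ray (c ξ₀ x₀ : ℝ) (hc : 0 < c) (hξ : ξ₀ ≠ 0)
    (M₀ : ℂ) (ε : ℝ) (hε : ε = 1 ∨ ε = -1)
    (xr : ℝ → ℝ) (hxr : ∀ t, xr t = x₀ + ε * Real.sqrt c * (ξ₀ / |ξ₀|) * t)
    (φ : ℝ → ℝ → ℂ)
    (hφ : ∀ x t, φ x t = (ξ₀ : ℂ) * ((x : ℂ) - (xr t : ℂ)) +
        M₀ / 2 * ((x : ℂ) - (xr t : ℂ)) ^ 2) :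
    ∀ t, deriv (fun y : ℝ =>
        (c : ℂ) * (deriv (fun z : ℝ => φ z t) y) ^ 2 -
          (deriv (fun s : ℝ => φ y s) t) ^ 2) (xr t) = 0 := by
  intro t
  set v := ε * Real.sqrt c * (ξ₀ / |ξ₀|)
  have hv : (v : ℂ) ^ 2 = c := by
    exact_mod_cast sq_sign_mul_sqrt_mul_div_abs hc.le hε hξ
  have hray : HasDerivAt xr v t := by
    rw [funext hxr]
    simpa using ((hasDerivAt_id t).const_mul v).const_add x₀
  have hφ' : φ = fun (x t : ℝ) => (ξ₀ : ℂ) * ((x : ℂ) - xr t) + M₀ / 2 * ((x : ℂ) - xr t) ^ 2 :=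
    funext₂ hφ
  have hR : ∀ y : ℝ, (c : ℂ) * deriv (fun z : ℝ => φ z t) y ^ 2 -
      deriv (fun s : ℝ => φ y s) t ^ 2 = 0 := fun y => by
    rw [hφ', eikonal_travellingWave (hasDerivAt_linear_add_half_mul_sq (ξ₀ : ℂ) M₀) hray,
      hv, sub_self, zero_mul]
  simp only [hR, deriv_const]
end
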